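/- Let (A, 𝔪) be a Buchsbaum local ring of dimension d ≥ 1, let x₁, …, x_d be a system of parameters, let n₁, …, n_d ≥ 1 be integers with n_i ≥ 2 for some i, and set Q = (x₁^{n₁}, …, x_d^{n_d}). Let W = H⁰_𝔪(A) be the 0-th local cohomology (equivalently W = (0) : 𝔪^∞). Then (Q + W) : 𝔪 = Q : 𝔪. -/

import Mathlib

open Ideal IsLocalRing

/-- A sequence `x₁, …, x_s` is a `d`-sequence. -/
def IsDSeq {R : Type*} [CommRing R] {s : ℕ} (x : Fin s → R) : Prop :=
  ∀ i j : Fin s, i ≤ j →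
    (Ideal.span (x '' {k | k < i})).colon (Ideal.span {x i}) =
    (Ideal.span (x '' {k | k < i})).colon (Ideal.span {x i * x j})

/-- A strong `d`-sequence: all power sequences are `d`-sequences. -/
def IsStrongDSeq {R : Type*} [CommRing R] {s : ℕ} (x : Fin s → R) : Prop :=
  ∀ n : Fin s → ℕ, (∀ i, 1 ≤ n i) → IsDSeq (fun i => x i ^ n i)

/-- `x₁, …, x_d` is a system of parameters of the local ring `A`. -/
def IsSOP {A : Type*} [CommRing A] [IsLocalRing A] {d : ℕ} (x : Fin d → A) : Prop :=
  ringKrullDim A = d ∧ (Ideal.span (Set.range x)).radical = maximalIdeal A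

/-- `Q` is a parameter ideal: generated by a system of parameters. -/
def IsParameterIdeal (A : Type*) [CommRing A] [IsLocalRing A] (Q : Ideal A) : Prop :=
  ∃ (d : ℕ) (x : Fin d → A), IsSOP x ∧ Q = Ideal.span (Set.range x)

/-- A Buchsbaum local ring: every system of parameters is a weak `A`-sequence. -/
def IsBuchsbaum (A : Type*) [CommRing A] [IsLocalRing A] : Prop :=
  ∀ (d : ℕ) (x : Fin d → A), IsSOP x →
    ∀ i : Fin d,
      (Ideal.span (x '' {k | k < i})).colon (Ideal.span {x i}) =
      (Ideal.span (x '' {k | k < i})).colon (maximalIdeal A)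

/-- The 0-th local cohomology `H⁰_𝔪(A)`, as the ideal of elements killed by a power of `𝔪`. -/
noncomputable def H0 (A : Type*) [CommRing A] [IsLocalRing A] : Ideal A :=
  ⨆ n : ℕ, (⊥ : Ideal A).colon (((maximalIdeal A) ^ n : Ideal A) : Set A)

/-- The length of a module, as the Krull dimension of its submodule lattice (valued in `ℕ∞`). -/
noncomputable def moduleLength (R M : Type*) [Ring R] [AddCommGroup M] [Module R M] : ℕ∞ :=
  (Order.krullDim (Submodule R M)).unbotD 0

/-- `ℓ_A(I/Q)`: the length of `I/Q`. -/
noncomputable def quotLength {A : Type*} [CommRing A] (Q I : Ideal A) : ℕ∞ :=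
  moduleLength (A ⧸ Q) (I.map (Ideal.Quotient.mk Q))

/-- `r(A)`: the supremum of the indices of reducibility of parameter ideals. -/
noncomputable def typeR (A : Type*) [CommRing A] [IsLocalRing A] : ℕ∞ :=
  ⨆ Q ∈ {Q : Ideal A | IsParameterIdeal A Q}, quotLength Q (Q.colon (maximalIdeal A))

/-- The reduction number `r_Q(I) = min{n ≥ 0 ∣ I^{n+1} = Q Iⁿ}`. -/
noncomputable def reductionNumber {A : Type*} [CommRing A] (Q I : Ideal A) : ℕ :=
  sInf {n : ℕ | I ^ (n + 1) = Q * I ^ n}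

/-- `x` is integral over the ideal `Q`. -/
def IsIntegralOverIdeal {A : Type*} [CommRing A] (Q : Ideal A) (x : A) : Prop :=
  ∃ n : ℕ, 0 < n ∧ ∃ c : ℕ → A, (∀ i ∈ Finset.Icc 1 n, c i ∈ Q ^ i) ∧
    x ^ n + ∑ i ∈ Finset.Icc 1 n, c i * x ^ (n - i) = 0

/-- `A` has Hilbert–Samuel multiplicity `e` (with respect to its maximal ideal). -/
def HasHSMultiplicity (A : Type*) [CommRing A] [IsLocalRing A] (e : ℕ) : Prop :=
  ∃ d : ℕ, ringKrullDim A = d ∧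
    Filter.Tendsto
      (fun n : ℕ =>
        ((d.factorial : ℝ) * ((moduleLength A (A ⧸ (maximalIdeal A) ^ n)).toNat : ℝ)) / (n : ℝ) ^ d)
      Filter.atTop (nhds (e : ℝ))

/-- The local ring `A` has depth `n`. -/
def HasDepth (A : Type*) [CommRing A] [IsLocalRing A] (n : ℕ) : Prop :=
  (∃ rs : List A, rs.length = n ∧ (∀ a ∈ rs, a ∈ maximalIdeal A) ∧
      RingTheory.Sequence.IsRegular A rs) ∧
    ∀ rs : List A, (∀ a ∈ rs, a ∈ maximalIdeal A) → RingTheory.Sequence.IsRegular A rs →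
      rs.length ≤ n

/-!
Choose `j` with `n_j = p + 1 ≥ 2` and put `q = (x_i^{n_i} : i ≠ j)`, so that `Q = q + (x_j^{p+1})`.
Applying the Buchsbaum property to a reordered power of the system of parameters gives
`q : x_j^k = q : 𝔪` for every `k ≥ 1`, and also `𝔪 W = 0`.
If `a 𝔪 ⊆ Q + W`, write `a x_j = r + c x_j^{p+1} + w`; multiplying by `x_j^p` kills `w`, so
`a - c x_j^p ∈ q : x_j^{p+1} = q : 𝔪`. For `u ∈ 𝔪` it remains to see that `c u x_j^p ∈ Q`:
it lies in `Q + W`, and writing it as `r' + c' x_j^{p+1} + w'` and multiplying by `x_j` gives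
`c u - c' x_j ∈ q : x_j^{p+1} = q : x_j^p`, whence `c u x_j^p ∈ q + (x_j^{p+1})`.
-/

section ColonSup

variable {R : Type*} [CommRing R] {q W : Ideal R} {x b : R}

theorem exists_sub_mul_pow_mem_colon {m k : ℕ} (hW : ∀ w ∈ W, w * x ^ m = 0)
    (hb : b * x ^ k ∈ q ⊔ span {x ^ (m + k)} ⊔ W) :
    ∃ c, b - c * x ^ m ∈ q.colon (span {x ^ (m + k)}) := by
  obtain ⟨y, hy, w, hw, hyw⟩ := Submodule.mem_sup.mp hb
  obtain ⟨r, hr, t, ht, rfl⟩ := Submodule.mem_sup.mp hy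
  obtain ⟨c, rfl⟩ := mem_span_singleton'.mp ht
  refine ⟨c, mem_colon_span_singleton.mpr ?_⟩
  have hmul : (b - c * x ^ m) * x ^ (m + k) = r * x ^ m + w * x ^ m := by
    linear_combination x ^ m * hyw.symm
  rw [hmul, hW w hw, add_zero]
  exact q.mul_mem_right _ hr

theorem mul_pow_mem_of_mem_sup {p : ℕ}
    (hq : q.colon (span {x ^ (p + 1)}) ≤ q.colon (span {x ^ p})) (hW : ∀ w ∈ W, w * x = 0)
    (hb : b * x ^ p ∈ q ⊔ span {x ^ (p + 1)} ⊔ W) : b * x ^ p ∈ q ⊔ span {x ^ (p + 1)} := by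
  obtain ⟨c, hc⟩ := exists_sub_mul_pow_mem_colon (m := 1) (k := p) (by simpa using hW)
    (by rwa [add_comm 1 p])
  rw [add_comm 1 p, pow_one] at hc
  have hcq : (b - c * x) * x ^ p ∈ q := mem_colon_span_singleton.mp (hq hc)
  have hsplit : b * x ^ p = (b - c * x) * x ^ p + c * x ^ (p + 1) := by ring
  rw [hsplit]
  exact Submodule.add_mem_sup hcq (mem_span_singleton'.mpr ⟨c, rfl⟩)

theorem sup_sup_colon_eq_colon {𝔪 : Ideal R} {p : ℕ} (hx : x ∈ 𝔪) (hp : p ≠ 0)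
    (hq₁ : q.colon (span {x ^ (p + 1)}) = q.colon 𝔪) (hq₂ : q.colon (span {x ^ p}) = q.colon 𝔪)
    (hW : W ≤ (⊥ : Ideal R).colon 𝔪) :
    (q ⊔ span {x ^ (p + 1)} ⊔ W).colon 𝔪 = (q ⊔ span {x ^ (p + 1)}).colon 𝔪 := by
  have hW_mul : ∀ w ∈ W, ∀ u ∈ 𝔪, w * u = 0 := fun w hw u hu => by
    simpa using Submodule.mem_colon.mp (hW hw) u hu
  refine le_antisymm (fun a ha => Submodule.mem_colon.mpr fun u hu => ?_)
    (Submodule.colon_mono le_sup_left le_rfl)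
  have hmem : ∀ v ∈ 𝔪, a * v ∈ q ⊔ span {x ^ (p + 1)} ⊔ W := fun v hv =>
    Submodule.mem_colon.mp ha v hv
  obtain ⟨c, hc⟩ := exists_sub_mul_pow_mem_colon (m := p) (k := 1)
    (fun w hw => hW_mul w hw _ (pow_mem_of_mem _ hx _ (Nat.pos_of_ne_zero hp)))
    (by simpa using hmem x hx)
  rw [hq₁] at hc
  have hr : (a - c * x ^ p) * u ∈ q := Submodule.mem_colon.mp hc u hu
  have hcu : c * u * x ^ p ∈ q ⊔ span {x ^ (p + 1)} := by
    refine mul_pow_mem_of_mem_sup (hq₁.trans hq₂.symm).le (fun w hw => hW_mul w hw x hx) ?_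
    have hdiff : c * u * x ^ p = a * u - (a - c * x ^ p) * u := by ring
    rw [hdiff]
    exact sub_mem (hmem u hu) (Submodule.mem_sup_left (Submodule.mem_sup_left hr))
  have hsplit : a * u = (a - c * x ^ p) * u + c * u * x ^ p := by ring
  rw [smul_eq_mul, hsplit]
  exact add_mem (Submodule.mem_sup_left hr) hcu

end ColonSup

theorem Ideal.radical_span_range_pow {R ι : Type*} [CommSemiring R] (x : ι → R) {m : ι → ℕ}
    (hm : ∀ i, 1 ≤ m i) :
    (span (Set.range fun i => x i ^ m i)).radical = (span (Set.range x)).radical :=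
  le_antisymm
    (radical_mono <| span_le.mpr <| Set.range_subset_iff.mpr fun i =>
      pow_mem_of_mem _ (subset_span (Set.mem_range_self i)) _ (hm i))
    (radical_le_radical_iff.mpr <| span_le.mpr <| Set.range_subset_iff.mpr fun i =>
      mem_radical_iff.mpr ⟨m i, subset_span ⟨i, rfl⟩⟩)

theorem Ideal.span_range_eq_span_image_compl_sup {R ι : Type*} [CommSemiring R] (f : ι → R)
    (j : ι) : span (Set.range f) = span (f '' {j}ᶜ) ⊔ span {f j} := by
  rw [← Set.insert_image_compl_eq_range f j, span_insert, sup_comm]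

section LocalRing

variable {A : Type*} [CommRing A] [IsLocalRing A] {d : ℕ} {x : Fin d → A}

namespace IsSOP

theorem pow (hx : IsSOP x) {m : Fin d → ℕ} (hm : ∀ i, 1 ≤ m i) : IsSOP fun i => x i ^ m i :=
  ⟨hx.1, by rw [radical_span_range_pow x hm, hx.2]⟩

theorem comp_perm (hx : IsSOP x) (σ : Equiv.Perm (Fin d)) : IsSOP (x ∘ σ) :=
  ⟨hx.1, by rw [σ.surjective.range_comp x, hx.2]⟩

theorem mem_maximalIdeal (hx : IsSOP x) (i : Fin d) : x i ∈ maximalIdeal A :=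
  hx.2 ▸ le_radical (subset_span ⟨i, rfl⟩)

end IsSOP

namespace IsBuchsbaum

theorem colon_span_image_compl_eq (hB : IsBuchsbaum A) (hx : IsSOP x) (j : Fin d) :
    (span (x '' {j}ᶜ)).colon (span {x j}) = (span (x '' {j}ᶜ)).colon (maximalIdeal A) := by
  cases d with
  | zero => exact j.elim0
  | succ d =>
    have hprefix : (x ∘ Equiv.swap j (Fin.last d)) '' {k | k < Fin.last d} = x '' {j}ᶜ := by
      rw [Set.image_comp, show {k | k < Fin.last d} = {Fin.last d}ᶜ by
        ext k; simp [Fin.lt_last_iff_ne_last], Set.image_compl_eq (Equiv.bijective _),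
        Set.image_singleton, Equiv.swap_apply_right]
    have key := hB _ _ (hx.comp_perm (Equiv.swap j (Fin.last d))) (Fin.last d)
    rwa [hprefix, Function.comp_apply, Equiv.swap_apply_right] at key

theorem colon_span_pow_eq (hB : IsBuchsbaum A) (hx : IsSOP x) {n : Fin d → ℕ}
    (hn : ∀ i, 1 ≤ n i) (j : Fin d) {k : ℕ} (hk : 1 ≤ k) :
    (span ((fun i => x i ^ n i) '' {j}ᶜ)).colon (span {x j ^ k}) =
      (span ((fun i => x i ^ n i) '' {j}ᶜ)).colon (maximalIdeal A) := by
  have hm : ∀ i, 1 ≤ Function.update n j k i := fun i => by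
    rcases eq_or_ne i j with rfl | h <;> simp [*]
  have himage : (fun i => x i ^ Function.update n j k i) '' {j}ᶜ = (fun i => x i ^ n i) '' {j}ᶜ :=
    Set.image_congr fun i hi => by rw [Function.update_of_ne hi]
  have key := hB.colon_span_image_compl_eq (hx.pow hm) j
  rwa [himage, Function.update_self] at key

theorem H0_le_colon_maximalIdeal (hB : IsBuchsbaum A) (hx : IsSOP x) (hd : 0 < d) :
    H0 A ≤ (⊥ : Ideal A).colon (maximalIdeal A) := by
  refine iSup_le fun N => ?_
  rcases Nat.eq_zero_or_pos N with rfl | hN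
  · simp
  · let i₀ : Fin d := ⟨0, hd⟩
    have hm : ∀ i, 1 ≤ Function.update (1 : Fin d → ℕ) i₀ N i := fun i => by
      rcases eq_or_ne i i₀ with rfl | h
      · rw [Function.update_self]
        exact hN
      · simp [h]
    have hprefix : {k : Fin d | k < i₀} = ∅ := by ext k; simp [i₀, Fin.lt_def]
    have key := hB d _ (hx.pow hm) i₀
    rw [hprefix, Set.image_empty, span_empty, Function.update_self] at key
    rw [← key]
    exact Submodule.colon_mono le_rfl
      (span_le.mpr (Set.singleton_subset_iff.mpr (pow_mem_pow (hx.mem_maximalIdeal i₀) N)))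

end IsBuchsbaum

end LocalRing

theorem stmt8_general {A : Type*} [CommRing A] [IsLocalRing A]
    (hB : IsBuchsbaum A) {d : ℕ} (x : Fin d → A) (hsop : IsSOP x)
    (n : Fin d → ℕ) (hn1 : ∀ i, 1 ≤ n i) (hn2 : ∃ i, 2 ≤ n i)
    (Q : Ideal A) (hQ : Q = Ideal.span (Set.range fun i => x i ^ n i)) :
    (Q + H0 A).colon (maximalIdeal A) = Q.colon (maximalIdeal A) := by
  obtain ⟨j, hj⟩ := hn2
  obtain ⟨p, hp⟩ : ∃ p, n j = p + 1 := ⟨n j - 1, by omega⟩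
  have hQ' : Q = span ((fun i => x i ^ n i) '' {j}ᶜ) ⊔ span {x j ^ (p + 1)} := by
    rw [hQ, span_range_eq_span_image_compl_sup, hp]
  rw [Submodule.add_eq_sup, hQ']
  exact sup_sup_colon_eq_colon (hsop.mem_maximalIdeal j) (by omega)
    (hB.colon_span_pow_eq hsop hn1 j (by omega)) (hB.colon_span_pow_eq hsop hn1 j (by omega))
    (hB.H0_le_colon_maximalIdeal hsop j.pos)

theorem stmt8 {A : Type*} [CommRing A] [IsLocalRing A] [IsNoetherianRing A]
    (hB : IsBuchsbaum A) {d : ℕ} (hd : 1 ≤ d) (x : Fin d → A) (hsop : IsSOP x)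
    (n : Fin d → ℕ) (hn1 : ∀ i, 1 ≤ n i) (hn2 : ∃ i, 2 ≤ n i)
    (Q : Ideal A) (hQ : Q = Ideal.span (Set.range fun i => x i ^ n i)) :
    (Q + H0 A).colon (maximalIdeal A) = Q.colon (maximalIdeal A) :=
  stmt8_general hB x hsop n hn1 hn2 Q hQ
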